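/- arXiv:2602.14757 — 4 statements merged into one kernel-verified Lean document; each statement's English description precedes it below -/
import Mathlib

section
/- (Abstract form of the differentiated equation (2.14)–(2.15), first order.) For t ∈ [0,1]^N let u(t) ∈ H denote the unique solution of a_t(u(t), v) = ℓ_t(v) for all v ∈ H. Then the solution map t ↦ u(t) is (Fréchet) differentiable at every interior point t of [0,1]^N, and for each i ∈ {1, …, N} its partial derivative ∂_{t_i} u(t) is the unique element w_i ∈ H satisfying a_t(w_i, v) = ℓ_i(v) − b_i(u(t), v) for all v ∈ H. -/
/-!
Write the problem as `B s (u s) = L s` in the dual of `H`, where `B s = b0 + ∑ sᵢ • bᵢ` and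
`L s = l0 + ∑ sᵢ • lᵢ` depend affinely on `s`. By Lax–Milgram and Riesz, coercivity makes `B t` an
isomorphism `H ≃ H*`. Invertibility is an open condition and inversion is smooth, so near an
interior point `u s = (B s)⁻¹ (L s)` is differentiable. Differentiating `B s (u s) = L s` in the
direction `eᵢ` by the product rule gives `B t (∂ᵢ u) + bᵢ (u t) = lᵢ`, and injectivity of `B t`
makes this characterise `∂ᵢ u`.
-/

open Filter Topology ContinuousLinearMap

section

variable {𝕜 E F : Type*} [NontriviallyNormedField 𝕜] [NormedAddCommGroup E] [NormedSpace 𝕜 E]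
  [CompleteSpace E] [NormedAddCommGroup F] [NormedSpace 𝕜 F]

theorem ContinuousLinearMap.IsInvertible.eventually_isInvertible {X : Type*} [TopologicalSpace X]
    {B : X → E →L[𝕜] F} {t : X} (hBt : (B t).IsInvertible) (hBc : ContinuousAt B t) :
    ∀ᶠ s in 𝓝 t, (B s).IsInvertible := by
  obtain ⟨e, he⟩ := hBt
  exact hBc.preimage_mem_nhds (he ▸ ContinuousLinearEquiv.nhds e)

theorem eventuallyEq_inverse_apply_of_apply_eq {X : Type*} [TopologicalSpace X]
    {B : X → E →L[𝕜] F} {L : X → F} {u : X → E} {t : X}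
    (hBt : (B t).IsInvertible) (hBc : ContinuousAt B t) (hu : (fun s ↦ B s (u s)) =ᶠ[𝓝 t] L) :
    u =ᶠ[𝓝 t] fun s ↦ (B s).inverse (L s) := by
  filter_upwards [hBt.eventually_isInvertible hBc, hu] with s hs hus
  exact (hs.inverse_apply_eq.2 hus.symm).symm

variable {P : Type*} [NormedAddCommGroup P] [NormedSpace 𝕜 P]
  {B : P → E →L[𝕜] F} {L : P → F} {u : P → E} {t : P}

theorem differentiableAt_of_apply_eq (hBt : (B t).IsInvertible)
    (hB : DifferentiableAt 𝕜 B t) (hL : DifferentiableAt 𝕜 L t)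
    (hu : (fun s ↦ B s (u s)) =ᶠ[𝓝 t] L) :
    DifferentiableAt 𝕜 u t := by
  have hinv : DifferentiableAt 𝕜 (fun s ↦ (B s).inverse) t :=
    ((hBt.contDiffAt_map_inverse (n := 1)).differentiableAt one_ne_zero).comp t hB
  exact (hinv.clm_apply hL).congr_of_eventuallyEq
    (eventuallyEq_inverse_apply_of_apply_eq hBt hB.continuousAt hu)

omit [CompleteSpace E] in
theorem apply_fderiv_add_of_apply_eq {B' : P →L[𝕜] E →L[𝕜] F} {L' : P →L[𝕜] F}
    (hB : HasFDerivAt B B' t) (hL : HasFDerivAt L L' t) (hdu : DifferentiableAt 𝕜 u t)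
    (hu : (fun s ↦ B s (u s)) =ᶠ[𝓝 t] L) (h : P) :
    B t (fderiv 𝕜 u t h) + B' h (u t) = L' h := by
  have hBu := (hB.clm_apply hdu.hasFDerivAt).congr_of_eventuallyEq hu.symm
  simpa using congr($(hBu.unique hL) h)

end

section

variable {𝕜 ι M : Type*} [NontriviallyNormedField 𝕜] [Fintype ι]
  [NormedAddCommGroup M] [NormedSpace 𝕜 M]

theorem hasFDerivAt_add_sum_smul (x₀ : M) (x : ι → M) (t : ι → 𝕜) :
    HasFDerivAt (fun s : ι → 𝕜 ↦ x₀ + ∑ i, s i • x i)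
      (∑ i, (proj i : (ι → 𝕜) →L[𝕜] 𝕜).smulRight (x i)) t := by
  have := HasFDerivAt.sum (u := Finset.univ) fun i _ ↦
    (hasFDerivAt_apply (𝕜 := 𝕜) i t).smul_const (x i)
  simpa using this.const_add x₀

theorem sum_proj_smulRight_apply_single [DecidableEq ι] (x : ι → M) (i : ι) :
    (∑ j, (proj j : (ι → 𝕜) →L[𝕜] 𝕜).smulRight (x j)) (Pi.single i 1) = x i := by
  simp [Pi.single_apply]

end

theorem IsCoercive.isInvertible {V : Type*} [NormedAddCommGroup V] [InnerProductSpace ℝ V]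
    [CompleteSpace V] {B : V →L[ℝ] V →L[ℝ] ℝ} (hB : IsCoercive B) : B.IsInvertible := by
  refine ⟨ContinuousLinearEquiv.ofBijective B (LinearMap.ker_eq_bot'.2 fun v hv ↦ ?_)
    (LinearMap.range_eq_top.2 fun f ↦ ?_), rfl⟩
  · obtain ⟨C, hC, hBC⟩ := hB
    by_contra hv0
    have hpos : 0 < C * ‖v‖ * ‖v‖ := by have := norm_pos_iff.2 hv0; positivity
    simpa [show B v = 0 from hv] using hpos.trans_le (hBC v)
  · -- `B v w = ⟪e v, w⟫` by Lax–Milgram and `f w = ⟪toDual.symm f, w⟫` by Riesz.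
    set e := hB.continuousLinearEquivOfBilin
    refine ⟨e.symm ((InnerProductSpace.toDual ℝ V).symm f), ext fun w ↦ ?_⟩
    show B _ w = f w
    rw [← hB.continuousLinearEquivOfBilin_apply, ContinuousLinearEquiv.apply_symm_apply,
      InnerProductSpace.toDual_symm_apply]

theorem parametric_solution_map_differentiable_first_order_general
    {H : Type*} [NormedAddCommGroup H] [InnerProductSpace ℝ H] [CompleteSpace H]
    {N : ℕ}
    (b0 : H →L[ℝ] H →L[ℝ] ℝ) (b : Fin N → H →L[ℝ] H →L[ℝ] ℝ)
    (l0 : H →L[ℝ] ℝ) (l : Fin N → H →L[ℝ] ℝ)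
    (c : ℝ) (hc : 0 < c)
    (hcoer : ∀ t : Fin N → ℝ, (∀ i, t i ∈ Set.Icc (0 : ℝ) 1) →
      ∀ v : H, c * ‖v‖ ^ 2 ≤ b0 v v + ∑ i, t i * b i v v)
    (u : (Fin N → ℝ) → H)
    (hu : ∀ t : Fin N → ℝ, (∀ i, t i ∈ Set.Icc (0 : ℝ) 1) →
      ∀ v : H, b0 (u t) v + ∑ i, t i * b i (u t) v = l0 v + ∑ i, t i * l i v) :
    ∀ t ∈ interior {s : Fin N → ℝ | ∀ i, s i ∈ Set.Icc (0 : ℝ) 1},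
      DifferentiableAt ℝ u t ∧
      ∀ i : Fin N,
        (∀ v : H,
          b0 (fderiv ℝ u t (Pi.single i 1)) v
            + ∑ j, t j * b j (fderiv ℝ u t (Pi.single i 1)) v
          = l i v - b i (u t) v) ∧
        (∀ w : H,
          (∀ v : H, b0 w v + ∑ j, t j * b j w v = l i v - b i (u t) v) →
          w = fderiv ℝ u t (Pi.single i 1)) := by
  intro t ht
  set B : (Fin N → ℝ) → H →L[ℝ] H →L[ℝ] ℝ := fun s ↦ b0 + ∑ i, s i • b i
  set L : (Fin N → ℝ) → H →L[ℝ] ℝ := fun s ↦ l0 + ∑ i, s i • l i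
  have hB : HasFDerivAt B _ t := hasFDerivAt_add_sum_smul b0 b t
  have hL : HasFDerivAt L _ t := hasFDerivAt_add_sum_smul l0 l t
  have hsol : (fun s ↦ B s (u s)) =ᶠ[𝓝 t] L := by
    filter_upwards [isOpen_interior.mem_nhds ht] with s hs
    ext v
    simpa [B, L] using hu s (interior_subset hs) v
  have hinv : (B t).IsInvertible := IsCoercive.isInvertible
    ⟨c, hc, fun v ↦ by simpa [B, mul_assoc, sq] using hcoer t (interior_subset ht) v⟩
  have hdu := differentiableAt_of_apply_eq hinv hB.differentiableAt hL.differentiableAt hsol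
  have hderiv (i : Fin N) : B t (fderiv ℝ u t (Pi.single i 1)) = l i - b i (u t) := by
    have := apply_fderiv_add_of_apply_eq hB hL hdu hsol (Pi.single i 1)
    rw [sum_proj_smulRight_apply_single, sum_proj_smulRight_apply_single] at this
    exact eq_sub_of_add_eq this
  obtain ⟨e, he⟩ := hinv
  refine ⟨hdu, fun i ↦ ⟨fun v ↦ by simpa [B] using congr($(hderiv i) v), fun w hw ↦ e.injective ?_⟩⟩
  rw [← ContinuousLinearEquiv.coe_coe, he, hderiv i]
  ext v
  simpa [B] using hw v

/-- Abstract form of the differentiated equation (2.14)–(2.15), first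
order: the solution map `t ↦ u(t)` is Fréchet differentiable at every interior point `t`
of the cube `[0,1]^N`, and for each `i` the partial derivative `∂_{tᵢ} u(t)` is the unique
element `wᵢ ∈ H` satisfying `a_t(wᵢ, v) = ℓᵢ(v) − bᵢ(u(t), v)` for all `v ∈ H`. -/
theorem parametric_solution_map_differentiable_first_order
    {H : Type*} [NormedAddCommGroup H] [InnerProductSpace ℝ H] [CompleteSpace H]
    {N : ℕ} (hN : 1 ≤ N)
    (b0 : H →L[ℝ] H →L[ℝ] ℝ) (b : Fin N → H →L[ℝ] H →L[ℝ] ℝ)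
    (l0 : H →L[ℝ] ℝ) (l : Fin N → H →L[ℝ] ℝ)
    (c : ℝ) (hc : 0 < c)
    (hcoer : ∀ t : Fin N → ℝ, (∀ i, t i ∈ Set.Icc (0 : ℝ) 1) →
      ∀ v : H, c * ‖v‖ ^ 2 ≤ b0 v v + ∑ i, t i * b i v v)
    (u : (Fin N → ℝ) → H)
    (hu : ∀ t : Fin N → ℝ, (∀ i, t i ∈ Set.Icc (0 : ℝ) 1) →
      ∀ v : H, b0 (u t) v + ∑ i, t i * b i (u t) v = l0 v + ∑ i, t i * l i v) :
    ∀ t ∈ interior {s : Fin N → ℝ | ∀ i, s i ∈ Set.Icc (0 : ℝ) 1},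
      DifferentiableAt ℝ u t ∧
      ∀ i : Fin N,
        (∀ v : H,
          b0 (fderiv ℝ u t (Pi.single i 1)) v
            + ∑ j, t j * b j (fderiv ℝ u t (Pi.single i 1)) v
          = l i v - b i (u t) v) ∧
        (∀ w : H,
          (∀ v : H, b0 w v + ∑ j, t j * b j w v = l i v - b i (u t) v) →
          w = fderiv ℝ u t (Pi.single i 1)) :=
  parametric_solution_map_differentiable_first_order_general b0 b l0 l c hc hcoer u hu
end

section
/- (Abstract form of Theorem 2.2, full statement: C^k regularity and Lipschitz bounds for all parameter derivatives.) Assume in addition that the coercivity hypothesis a_t(v,v) ≥ c‖v‖_H² holds for all t in an open set U ⊆ ℝ^N containing [0,1]^N. For t ∈ U let u(t) ∈ H denote the unique solution of a_t(u(t), v) = ℓ_t(v) for all v ∈ H. Then the solution map t ↦ u(t) is infinitely differentiable from U to H, and for every multi-index α ∈ ℕ^N there exists a constant C_α > 0, depending only on c, the operator norms ‖b_i‖ and ‖ℓ_i‖ (i = 0, …, N), α, and N, such that ‖∂_t^α u(t^{(1)}) − ∂_t^α u(t^{(2)})‖_H ≤ C_α ‖t^{(1)} − t^{(2)}‖_{ℝ^N}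 for all t^{(1)}, t^{(2)} ∈ [0,1]^N. -/
open scoped BigOperators
open InnerProductSpace RealInnerProductSpace

/-- Abstract form of Theorem 2.2, full statement: under coercivity on an
open set `U ⊇ [0,1]^N`, the solution map `t ↦ u(t)` is infinitely differentiable on `U`,
and every iterated partial derivative `∂_t^α u` (encoded as iterated directional
derivatives along a list `L` of coordinate directions) is Lipschitz on the cube `[0,1]^N`
with respect to the Euclidean norm: there is `C_α > 0` with
`‖∂_t^α u(t¹) − ∂_t^α u(t²)‖ ≤ C_α ‖t¹ − t²‖` for all `t¹, t²` in the cube. -/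
theorem parametric_solution_map_smooth_and_derivatives_lipschitz
    {H : Type*} [NormedAddCommGroup H] [InnerProductSpace ℝ H] [CompleteSpace H]
    {N : ℕ} (hN : 1 ≤ N)
    (b0 : H →L[ℝ] H →L[ℝ] ℝ) (b : Fin N → H →L[ℝ] H →L[ℝ] ℝ)
    (l0 : H →L[ℝ] ℝ) (l : Fin N → H →L[ℝ] ℝ)
    (c : ℝ) (hc : 0 < c)
    (U : Set (Fin N → ℝ)) (hUopen : IsOpen U)
    (hU : {s : Fin N → ℝ | ∀ i, s i ∈ Set.Icc (0 : ℝ) 1} ⊆ U)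
    (hcoer : ∀ t ∈ U, ∀ v : H, c * ‖v‖ ^ 2 ≤ b0 v v + ∑ i, t i * b i v v)
    (u : (Fin N → ℝ) → H)
    (hu : ∀ t ∈ U, ∀ v : H,
      b0 (u t) v + ∑ i, t i * b i (u t) v = l0 v + ∑ i, t i * l i v) :
    ContDiffOn ℝ (⊤ : ℕ∞) u U ∧
    ∀ L : List (Fin N), ∃ C : ℝ, 0 < C ∧
      ∀ t1 t2 : Fin N → ℝ,
        (∀ i, t1 i ∈ Set.Icc (0 : ℝ) 1) → (∀ i, t2 i ∈ Set.Icc (0 : ℝ) 1) →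
        ‖(L.foldr (fun i g s => fderiv ℝ g s (Pi.single i (1 : ℝ))) u) t1
            - (L.foldr (fun i g s => fderiv ℝ g s (Pi.single i (1 : ℝ))) u) t2‖
          ≤ C * Real.sqrt (∑ i, (t1 i - t2 i) ^ 2) := by
  classical
  -- the bilinear form a_t
  set Bt : (Fin N → ℝ) → (H →L[ℝ] H →L[ℝ] ℝ) := fun t => b0 + ∑ i, t i • b i with hBtdef
  have hBt_apply : ∀ t (x y : H), Bt t x y = b0 x y + ∑ i, t i * b i x y := by
    intro t x y
    simp [Bt, ContinuousLinearMap.sum_apply, ContinuousLinearMap.smul_apply]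
  -- the associated operators
  set A : (Fin N → ℝ) → (H →L[ℝ] H) := fun t =>
    continuousLinearMapOfBilin b0 + ∑ i, t i • continuousLinearMapOfBilin (b i) with hAdef
  have hA_inner : ∀ t (x y : H), ⟪A t x, y⟫_ℝ = Bt t x y := by
    intro t x y
    simp only [A, ContinuousLinearMap.add_apply, ContinuousLinearMap.sum_apply,
      ContinuousLinearMap.smul_apply, inner_add_left, sum_inner, real_inner_smul_left,
      continuousLinearMapOfBilin_apply, hBt_apply]
  -- coercivity
  have hco : ∀ t ∈ U, IsCoercive (Bt t) := by
    intro t ht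
    refine ⟨c, hc, fun v => ?_⟩
    have := hcoer t ht v
    rw [hBt_apply]
    nlinarith [this]
  -- A t equals the Lax-Milgram operator
  have hAeq : ∀ t, A t = continuousLinearMapOfBilin (Bt t) := by
    intro t
    ext x
    exact unique_continuousLinearMapOfBilin (Bt t) fun w => hA_inner t x w
  -- A t is a unit for t ∈ U
  have hunit : ∀ t ∈ U, IsUnit (A t) := by
    intro t ht
    refine ⟨(hco t ht).continuousLinearEquivOfBilin.toUnit, ?_⟩
    rw [hAeq t]
    rfl
  -- Riesz representatives
  set F : (Fin N → ℝ) → H := fun t =>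
    (InnerProductSpace.toDual ℝ H).symm l0 + ∑ i, t i • (InnerProductSpace.toDual ℝ H).symm (l i)
    with hFdef
  have hF_inner : ∀ t (v : H), ⟪F t, v⟫_ℝ = l0 v + ∑ i, t i * l i v := by
    intro t v
    simp [F, inner_add_left, sum_inner, real_inner_smul_left, InnerProductSpace.toDual_symm_apply]
  -- the PDE: A t (u t) = F t
  have hsol : ∀ t ∈ U, A t (u t) = F t := by
    intro t ht
    refine ext_inner_right ℝ fun v => ?_
    rw [hA_inner, hBt_apply, hF_inner]
    exact hu t ht v
  -- solution formula
  have hform : ∀ t ∈ U, u t = Ring.inverse (A t) (F t) := by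
    intro t ht
    obtain ⟨x, hx⟩ := hunit t ht
    have h1 : Ring.inverse (A t) = (↑x⁻¹ : H →L[ℝ] H) := by
      rw [← hx, Ring.inverse_unit]
    rw [h1, ← hsol t ht, ← hx, ← ContinuousLinearMap.mul_apply, Units.inv_mul,
      ContinuousLinearMap.one_apply]
  -- smoothness of A, F
  have hAsm : ContDiff ℝ (⊤ : ℕ∞) A := by
    apply ContDiff.add contDiff_const
    apply ContDiff.sum
    intro i _
    exact ((ContinuousLinearMap.proj i : (Fin N → ℝ) →L[ℝ] ℝ).contDiff).smul contDiff_const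
  have hFsm : ContDiff ℝ (⊤ : ℕ∞) F := by
    apply ContDiff.add contDiff_const
    apply ContDiff.sum
    intro i _
    exact ((ContinuousLinearMap.proj i : (Fin N → ℝ) →L[ℝ] ℝ).contDiff).smul contDiff_const
  -- smoothness of u on U
  have husm : ContDiffOn ℝ (⊤ : ℕ∞) u U := by
    have h1 : ContDiffOn ℝ (⊤ : ℕ∞) (fun t => Ring.inverse (A t) (F t)) U := by
      intro t ht
      apply ContDiffAt.contDiffWithinAt
      obtain ⟨x, hx⟩ := hunit t ht
      have hinv : ContDiffAt ℝ (⊤ : ℕ∞) (fun s => Ring.inverse (A s)) t := by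
        have := contDiffAt_ringInverse ℝ (n := (⊤ : ℕ∞)) x
        rw [hx] at this
        exact this.comp t hAsm.contDiffAt
      exact hinv.clm_apply hFsm.contDiffAt
    exact h1.congr fun t ht => hform t ht
  refine ⟨husm, ?_⟩
  -- cube facts
  set K : Set (Fin N → ℝ) := {s : Fin N → ℝ | ∀ i, s i ∈ Set.Icc (0 : ℝ) 1} with hKdef
  have hKpi : K = Set.pi Set.univ fun _ => Set.Icc (0 : ℝ) 1 := by
    ext s
    exact ⟨fun h i _ => h i, fun h i => h i (Set.mem_univ i)⟩
  have hKcompact : IsCompact K := by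
    rw [hKpi]; exact isCompact_univ_pi fun _ => isCompact_Icc
  have hKconvex : Convex ℝ K := by
    rw [hKpi]; exact convex_pi fun i _ => convex_Icc 0 1
  -- euclidean norm dominates sup norm
  have hnorm : ∀ t1 t2 : Fin N → ℝ, ‖t1 - t2‖ ≤ Real.sqrt (∑ i, (t1 i - t2 i) ^ 2) := by
    intro t1 t2
    rw [pi_norm_le_iff_of_nonneg (Real.sqrt_nonneg _)]
    intro i
    have h1 : (t1 i - t2 i) ^ 2 ≤ ∑ j, (t1 j - t2 j) ^ 2 :=
      Finset.single_le_sum (f := fun j => (t1 j - t2 j) ^ 2) (fun j _ => sq_nonneg _) (Finset.mem_univ i)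
    calc ‖(t1 - t2) i‖ = |t1 i - t2 i| := by simp [Real.norm_eq_abs]
      _ = Real.sqrt ((t1 i - t2 i) ^ 2) := (Real.sqrt_sq_eq_abs _).symm
      _ ≤ _ := Real.sqrt_le_sqrt h1
  -- lipschitz lemma for smooth functions on U
  have hlip : ∀ g : (Fin N → ℝ) → H, ContDiffOn ℝ (⊤ : ℕ∞) g U → ∃ C : ℝ, 0 < C ∧
      ∀ t1 t2 : Fin N → ℝ, (∀ i, t1 i ∈ Set.Icc (0 : ℝ) 1) → (∀ i, t2 i ∈ Set.Icc (0 : ℝ) 1) →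
        ‖g t1 - g t2‖ ≤ C * Real.sqrt (∑ i, (t1 i - t2 i) ^ 2) := by
    intro g hg
    have hdiff : ∀ x ∈ U, DifferentiableAt ℝ g x := by
      intro x hx
      exact (hg.contDiffAt (hUopen.mem_nhds hx)).differentiableAt (by simp)
    have hcont : ContinuousOn (fderiv ℝ g) U :=
      hg.continuousOn_fderiv_of_isOpen hUopen (by simp)
    obtain ⟨M, hM⟩ := hKcompact.exists_bound_of_continuousOn (hcont.mono hU)
    refine ⟨max M 1, lt_of_lt_of_le one_pos (le_max_right _ _), ?_⟩
    intro t1 t2 h1 h2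
    have hbound : ∀ x ∈ K, ‖fderiv ℝ g x‖ ≤ max M 1 := fun x hx =>
      le_trans (hM x hx) (le_max_left _ _)
    have := hKconvex.norm_image_sub_le_of_norm_fderiv_le
      (fun x hx => hdiff x (hU hx)) hbound h2 h1
    calc ‖g t1 - g t2‖ ≤ max M 1 * ‖t1 - t2‖ := this
      _ ≤ max M 1 * Real.sqrt (∑ i, (t1 i - t2 i) ^ 2) := by
          apply mul_le_mul_of_nonneg_left (hnorm t1 t2)
          exact le_of_lt (lt_of_lt_of_le one_pos (le_max_right _ _))
  -- derivatives stay smooth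
  have hfold : ∀ L : List (Fin N),
      ContDiffOn ℝ (⊤ : ℕ∞) (L.foldr (fun i g s => fderiv ℝ g s (Pi.single i (1 : ℝ))) u) U := by
    intro L
    induction L with
    | nil => exact husm
    | cons i L ih =>
      simp only [List.foldr_cons]
      exact (ih.fderiv_of_isOpen hUopen le_rfl).clm_apply contDiffOn_const
  intro L
  exact hlip _ (hfold L)
end

section
/- (Abstract core of the Potential Reconstruction Error Estimate, Section 4.4.) Let μ†, μ̂ ∈ L^∞(X) and u†, u_h†, û, û_h ∈ L²(X), and let C_s > 0. Assume: (i) stability: ‖μ̂ − μ†‖_{L^∞} ≤ C_s ‖Q[μ̂ · û] − Q[μ† · u†]‖_{L²}; (ii) quasi-minimality of the estimate: ‖Q[μ̂ · û_h] − Q[μ† · u†]‖_{L²} ≤ ‖Q[μ† · u_h†] − Q[μ† · u†]‖_{L²}; (iii) smallness of the surrogate error: C_s C_Q ‖û − û_h‖_{L²} ≤ 1/2. Then ‖μ̂ − μ†‖_{L^∞} ≤ 2 C_s C_Q ‖μ†‖_{L^∞} ( ‖u† − u_h†‖_{L²} + ‖û − û_h‖_{L²} ). -/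
open MeasureTheory

/-!
Write `e = ‖μ̂ − μ†‖`. By stability, the triangle inequality through `Q[μ̂ û_h]` and
quasi-minimality, `e / C_s` is bounded by `‖Q[μ̂ û] − Q[μ̂ û_h]‖ + ‖Q[μ† u_h†] − Q[μ† u†]‖`,
and each term is at most `C_Q ‖μ‖_{L^∞}` times an `L²` error of the state. The only
unknown left on the right is `‖μ̂‖ ≤ e + ‖μ†‖`, whose contribution `C_s C_Q ‖û − û_h‖ e`
is at most `e / 2` by the smallness assumption and can be absorbed into the left side.
-/

lemma le_two_mul_of_le_mul_add_of_le_half {e s r : ℝ} (he : 0 ≤ e) (h : e ≤ s * e + r)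
    (hs : s ≤ 1 / 2) : e ≤ 2 * r := by
  nlinarith

namespace MeasureTheory.Lp

variable {X 𝕜 : Type*} [MeasurableSpace X] {m : Measure X} [NormedRing 𝕜]

lemma toLp_mul_eq_smul {p q r : ENNReal} [ENNReal.HolderTriple p q r]
    (μ : Lp 𝕜 p m) (u : Lp 𝕜 q m) (h : MemLp (fun x => μ x * u x) r m) :
    h.toLp _ = μ • u :=
  rfl

lemma norm_smul_sub_smul_le {p q r : ENNReal} [ENNReal.HolderTriple p q r]
    (μ : Lp 𝕜 p m) (u v : Lp 𝕜 q m) :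
    ‖(μ • u : Lp 𝕜 r m) - μ • v‖ ≤ ‖μ‖ * ‖u - v‖ := by
  have hsub : (μ • (u - v) : Lp 𝕜 r m) = μ • u - μ • v := by
    rw [sub_eq_add_neg, Lp.add_smul, Lp.smul_neg, ← sub_eq_add_neg]
  exact hsub ▸ Lp.norm_smul_le μ (u - v)

end MeasureTheory.Lp

/-- Abstract core of the Potential Reconstruction Error Estimate
(Section 4.4): if the stability estimate
`‖μ̂ − μ†‖_{L^∞} ≤ C_s ‖Q[μ̂ û] − Q[μ† u†]‖_{L²}` holds, the estimate is quasi-minimal,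
`‖Q[μ̂ û_h] − Q[μ† u†]‖_{L²} ≤ ‖Q[μ† u_h†] − Q[μ† u†]‖_{L²}`, and the surrogate error is
small, `C_s C_Q ‖û − û_h‖_{L²} ≤ 1/2`, then
`‖μ̂ − μ†‖_{L^∞} ≤ 2 C_s C_Q ‖μ†‖_{L^∞} (‖u† − u_h†‖_{L²} + ‖û − û_h‖_{L²})`.
Here `Q` is a bounded linear operator on `L²` with `‖Q‖ ≤ C_Q`, `μ†, μ̂ ∈ L^∞`,
`u†, u_h†, û, û_h ∈ L²`, and `μ · u` denotes the pointwise product. -/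
theorem potential_reconstruction_error_estimate
    {X : Type*} [MeasurableSpace X] (m : Measure X)
    (μt μh : Lp ℝ ⊤ m) (ut uth uh uhh : Lp ℝ 2 m)
    (h1 : MemLp (fun x => μh x * uh x) 2 m)
    (h2 : MemLp (fun x => μh x * uhh x) 2 m)
    (h3 : MemLp (fun x => μt x * ut x) 2 m)
    (h4 : MemLp (fun x => μt x * uth x) 2 m)
    (Q : Lp ℝ 2 m →L[ℝ] Lp ℝ 2 m) (CQ : ℝ) (hCQ : ‖Q‖ ≤ CQ)
    (Cs : ℝ) (hCs : 0 < Cs)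
    (stab : ‖μh - μt‖ ≤ Cs * ‖Q (h1.toLp _) - Q (h3.toLp _)‖)
    (qmin : ‖Q (h2.toLp _) - Q (h3.toLp _)‖ ≤ ‖Q (h4.toLp _) - Q (h3.toLp _)‖)
    (small : Cs * CQ * ‖uh - uhh‖ ≤ 1 / 2) :
    ‖μh - μt‖ ≤ 2 * Cs * CQ * ‖μt‖ * (‖ut - uth‖ + ‖uh - uhh‖) := by
  simp only [Lp.toLp_mul_eq_smul] at stab qmin
  have hCQ0 : 0 ≤ CQ := (norm_nonneg Q).trans hCQ
  have hQ (μ : Lp ℝ ⊤ m) (u v : Lp ℝ 2 m) :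
      ‖Q (μ • u) - Q (μ • v)‖ ≤ CQ * (‖μ‖ * ‖u - v‖) := by
    rw [← map_sub]
    exact (Q.le_of_opNorm_le hCQ _).trans (by gcongr; exact Lp.norm_smul_sub_smul_le μ u v)
  have misfit : ‖Q (μh • uh) - Q (μt • ut)‖ ≤
      CQ * (‖μh‖ * ‖uh - uhh‖) + CQ * (‖μt‖ * ‖ut - uth‖) :=
    calc ‖Q (μh • uh) - Q (μt • ut)‖
        ≤ ‖Q (μh • uh) - Q (μh • uhh)‖ + ‖Q (μh • uhh) - Q (μt • ut)‖ :=
          norm_sub_le_norm_sub_add_norm_sub _ _ _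
      _ ≤ CQ * (‖μh‖ * ‖uh - uhh‖) + CQ * (‖μt‖ * ‖uth - ut‖) :=
          add_le_add (hQ μh uh uhh) (qmin.trans (hQ μt uth ut))
      _ = CQ * (‖μh‖ * ‖uh - uhh‖) + CQ * (‖μt‖ * ‖ut - uth‖) := by rw [norm_sub_rev uth]
  have absorbed : ‖μh - μt‖ ≤
      Cs * CQ * ‖uh - uhh‖ * ‖μh - μt‖ + Cs * CQ * ‖μt‖ * (‖ut - uth‖ + ‖uh - uhh‖) :=
    calc ‖μh - μt‖ ≤ Cs * (CQ * (‖μh‖ * ‖uh - uhh‖) + CQ * (‖μt‖ * ‖ut - uth‖)) :=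
          stab.trans (by gcongr)
      _ ≤ Cs * (CQ * ((‖μh - μt‖ + ‖μt‖) * ‖uh - uhh‖) + CQ * (‖μt‖ * ‖ut - uth‖)) := by
          gcongr
          exact norm_le_norm_sub_add μh μt
      _ = Cs * CQ * ‖uh - uhh‖ * ‖μh - μt‖ + Cs * CQ * ‖μt‖ * (‖ut - uth‖ + ‖uh - uhh‖) := by
          ring
  exact (le_two_mul_of_le_mul_add_of_le_half (norm_nonneg _) absorbed small).trans_eq (by ring)
end

section
/- (Abstract core of the Parameter Reconstruction Error Estimate, Section 4.4.) Let N ≥ 1 and let μ_0, μ_1, …, μ_N ∈ L^∞(X) with μ_1, …, μ_N linearly independent, and for t ∈ ℝ^N write μ(t) := μ_0 + Σ_{j=1}^N t_j μ_j. Let t†, t̂ ∈ ℝ^N, set μ† := μ(t†) and μ̂ := μ(t̂), let u†, u_h†, û, û_h ∈ L²(X), and let C_s > 0. Assume: (i) stability: ‖μ̂ − μ†‖_{L^∞} ≤ C_s ‖Q[μ̂ · û] − Q[μ† · u†]‖_{L²}; (ii) quasi-minimality: ‖Q[μ̂ · û_h] − Q[μ† · u†]‖_{L²} ≤ ‖Q[μ†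 · u_h†] − Q[μ† · u†]‖_{L²}; (iii) smallness: C_s C_Q ‖û − û_h‖_{L²} ≤ 1/2. Then there exists a constant C_μ > 0 depending only on μ_1, …, μ_N such that ‖t̂ − t†‖_{ℝ^N} ≤ 2 C_μ C_s C_Q ‖μ†‖_{L^∞} ( ‖u† − u_h†‖_{L²} + ‖û − û_h‖_{L²} ), where ‖·‖_{ℝ^N} is the Euclidean norm. -/
/-!
Linear independence of `μ₁, …, μ_N` makes `t ↦ ∑ tⱼ μⱼ` anti-Lipschitz from `ℝ^N` into
`L^∞`, so `‖t̂ − t†‖ ≤ C_μ ‖μ̂ − μ†‖ ≤ C_μ C_s D` with `D = ‖Q[μ̂ û] − Q[μ† u†]‖`.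
Passing through `Q[μ̂ û_h]` and using quasi-minimality,
`D ≤ C_Q ‖μ̂‖ ‖û − û_h‖ + C_Q ‖μ†‖ ‖u† − u_h†‖`, and `‖μ̂‖ ≤ ‖μ†‖ + C_s D`; the
smallness assumption lets the resulting term `C_Q C_s ‖û − û_h‖ D ≤ D / 2` be absorbed
into the left side.
-/

open MeasureTheory

theorem LinearIndependent.exists_sqrt_sum_sq_le_mul_norm_sum {ι E : Type*} [Fintype ι]
    [NormedAddCommGroup E] [NormedSpace ℝ E] {v : ι → E} (hv : LinearIndependent ℝ v) :
    ∃ K : ℝ, 0 < K ∧ ∀ c : ι → ℝ, √(∑ i, c i ^ 2) ≤ K * ‖∑ i, c i • v i‖ := by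
  let f : EuclideanSpace ℝ ι →ₗ[ℝ] E :=
    Fintype.linearCombination ℝ v ∘ₗ (WithLp.linearEquiv 2 ℝ (ι → ℝ)).toLinearMap
  have hf : Function.Injective f :=
    (linearIndependent_iff_injective_fintypeLinearCombination.mp hv).comp
      (WithLp.linearEquiv 2 ℝ (ι → ℝ)).injective
  obtain ⟨K, hK, hanti⟩ := f.injective_iff_antilipschitz.mp hf
  refine ⟨K, hK, fun c => ?_⟩
  simpa [f, EuclideanSpace.norm_eq, sq_abs, Fintype.linearCombination_apply] using
    hanti.le_mul_norm_sub 0 (WithLp.toLp 2 c)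

section Multiplier

variable {X : Type*} [MeasurableSpace X] {m : Measure X}

theorem norm_toLp_mul_sub_toLp_mul_le (g : Lp ℝ ⊤ m) (v w : Lp ℝ 2 m)
    (hv : MemLp (fun x => g x * v x) 2 m) (hw : MemLp (fun x => g x * w x) 2 m) :
    ‖hv.toLp _ - hw.toLp _‖ ≤ ‖g‖ * ‖v - w‖ := by
  rw [← MemLp.toLp_sub hv hw, Lp.norm_toLp]
  have hae : ((fun x => g x * v x) - fun x => g x * w x) =ᵐ[m] (⇑g • ⇑(v - w)) := by
    filter_upwards [Lp.coeFn_sub v w] with x hx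
    simp only [Pi.sub_apply, Pi.smul_apply', smul_eq_mul, hx]
    ring
  rw [eLpNorm_congr_ae hae, Lp.norm_def, Lp.norm_def, ← ENNReal.toReal_mul]
  exact ENNReal.toReal_mono (ENNReal.mul_ne_top (Lp.eLpNorm_ne_top g) (Lp.eLpNorm_ne_top _))
    (eLpNorm_smul_le_eLpNorm_top_mul_eLpNorm 2 (Lp.aestronglyMeasurable _) g)

theorem norm_map_toLp_mul_sub_map_toLp_mul_le {Q : Lp ℝ 2 m →L[ℝ] Lp ℝ 2 m} {CQ : ℝ}
    (hQ : ‖Q‖ ≤ CQ) (g : Lp ℝ ⊤ m) (v w : Lp ℝ 2 m)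
    (hv : MemLp (fun x => g x * v x) 2 m) (hw : MemLp (fun x => g x * w x) 2 m) :
    ‖Q (hv.toLp _) - Q (hw.toLp _)‖ ≤ CQ * (‖g‖ * ‖v - w‖) := by
  rw [← map_sub]
  exact (Q.le_of_opNorm_le hQ _).trans <|
    mul_le_mul_of_nonneg_left (norm_toLp_mul_sub_toLp_mul_le g v w hv hw)
      ((norm_nonneg Q).trans hQ)

end Multiplier

theorem parameter_reconstruction_error_estimate_general
    {X : Type*} [MeasurableSpace X] (m : Measure X)
    {N : ℕ}
    (μ0 : Lp ℝ ⊤ m) (μ : Fin N → Lp ℝ ⊤ m)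
    (hind : LinearIndependent ℝ μ) :
    ∃ Cμ : ℝ, 0 < Cμ ∧
      ∀ (tt th : Fin N → ℝ) (ut uth uh uhh : Lp ℝ 2 m)
        (h1 : MemLp (fun x => (μ0 + ∑ j, th j • μ j) x * uh x) 2 m)
        (h2 : MemLp (fun x => (μ0 + ∑ j, th j • μ j) x * uhh x) 2 m)
        (h3 : MemLp (fun x => (μ0 + ∑ j, tt j • μ j) x * ut x) 2 m)
        (h4 : MemLp (fun x => (μ0 + ∑ j, tt j • μ j) x * uth x) 2 m)
        (Q : Lp ℝ 2 m →L[ℝ] Lp ℝ 2 m) (CQ Cs : ℝ),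
        ‖Q‖ ≤ CQ → 0 < Cs →
        ‖(μ0 + ∑ j, th j • μ j) - (μ0 + ∑ j, tt j • μ j)‖
            ≤ Cs * ‖Q (h1.toLp _) - Q (h3.toLp _)‖ →
        ‖Q (h2.toLp _) - Q (h3.toLp _)‖ ≤ ‖Q (h4.toLp _) - Q (h3.toLp _)‖ →
        Cs * CQ * ‖uh - uhh‖ ≤ 1 / 2 →
        Real.sqrt (∑ j, (th j - tt j) ^ 2)
          ≤ 2 * Cμ * Cs * CQ * ‖μ0 + ∑ j, tt j • μ j‖ * (‖ut - uth‖ + ‖uh - uhh‖) := by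
  obtain ⟨K, hK, hKμ⟩ := hind.exists_sqrt_sum_sq_le_mul_norm_sum
  refine ⟨K, hK, fun tt th ut uth uh uhh h1 h2 h3 h4 Q CQ Cs hQ hCs hstab hquasi hsmall => ?_⟩
  set μh := μ0 + ∑ j, th j • μ j
  set μt := μ0 + ∑ j, tt j • μ j
  set D := ‖Q (h1.toLp _) - Q (h3.toLp _)‖
  have hCQ : 0 ≤ CQ := (norm_nonneg Q).trans hQ
  have hμh : ‖μh‖ ≤ ‖μt‖ + Cs * D := (norm_le_norm_add_norm_sub' μh μt).trans (by linarith)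
  have hD : D ≤ CQ * (‖μh‖ * ‖uh - uhh‖) + CQ * (‖μt‖ * ‖ut - uth‖) := by
    have h43 := norm_map_toLp_mul_sub_map_toLp_mul_le hQ μt uth ut h4 h3
    rw [norm_sub_rev uth] at h43
    exact (norm_sub_le_norm_sub_add_norm_sub _ (Q (h2.toLp _)) _).trans <|
      add_le_add (norm_map_toLp_mul_sub_map_toLp_mul_le hQ μh uh uhh h1 h2) (hquasi.trans h43)
  have hD_absorbed : D ≤ 2 * CQ * ‖μt‖ * (‖ut - uth‖ + ‖uh - uhh‖) := by
    have := mul_le_mul_of_nonneg_left hμh (mul_nonneg hCQ (norm_nonneg (uh - uhh)))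
    nlinarith [mul_le_mul_of_nonneg_right hsmall (norm_nonneg _ : 0 ≤ D)]
  have hdiff : μh - μt = ∑ j, (th - tt) j • μ j := by
    simp only [μh, μt, Pi.sub_apply, sub_smul, Finset.sum_sub_distrib, add_sub_add_left_eq_sub]
  calc √(∑ j, (th j - tt j) ^ 2) ≤ K * ‖μh - μt‖ := hdiff ▸ hKμ (th - tt)
    _ ≤ K * (Cs * D) := by gcongr
    _ ≤ K * (Cs * (2 * CQ * ‖μt‖ * (‖ut - uth‖ + ‖uh - uhh‖))) := by gcongr
    _ = _ := by ring

/-- Abstract core of the Parameter Reconstruction Error Estimate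
(Section 4.4): with `μ(t) = μ₀ + ∑ⱼ tⱼ μⱼ` for linearly independent `μ₁, …, μ_N ∈ L^∞`,
there is a constant `C_μ > 0` depending only on `μ₁, …, μ_N` such that whenever the
stability estimate `‖μ(t̂) − μ(t†)‖_{L^∞} ≤ C_s ‖Q[μ(t̂) û] − Q[μ(t†) u†]‖_{L²}` holds,
the estimate is quasi-minimal,
`‖Q[μ(t̂) û_h] − Q[μ(t†) u†]‖_{L²} ≤ ‖Q[μ(t†) u_h†] − Q[μ(t†) u†]‖_{L²}`, and the
surrogate error is small, `C_s C_Q ‖û − û_h‖_{L²} ≤ 1/2`, one has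
`‖t̂ − t†‖_{ℝ^N} ≤ 2 C_μ C_s C_Q ‖μ(t†)‖_{L^∞} (‖u† − u_h†‖_{L²} + ‖û − û_h‖_{L²})`.
Here `Q` is a bounded linear operator on `L²` with `‖Q‖ ≤ C_Q`, and `‖·‖_{ℝ^N}` is the
Euclidean norm. -/
theorem parameter_reconstruction_error_estimate
    {X : Type*} [MeasurableSpace X] (m : Measure X)
    {N : ℕ} (hN : 1 ≤ N)
    (μ0 : Lp ℝ ⊤ m) (μ : Fin N → Lp ℝ ⊤ m)
    (hind : LinearIndependent ℝ μ) :
    ∃ Cμ : ℝ, 0 < Cμ ∧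
      ∀ (tt th : Fin N → ℝ) (ut uth uh uhh : Lp ℝ 2 m)
        (h1 : MemLp (fun x => (μ0 + ∑ j, th j • μ j) x * uh x) 2 m)
        (h2 : MemLp (fun x => (μ0 + ∑ j, th j • μ j) x * uhh x) 2 m)
        (h3 : MemLp (fun x => (μ0 + ∑ j, tt j • μ j) x * ut x) 2 m)
        (h4 : MemLp (fun x => (μ0 + ∑ j, tt j • μ j) x * uth x) 2 m)
        (Q : Lp ℝ 2 m →L[ℝ] Lp ℝ 2 m) (CQ Cs : ℝ),
        ‖Q‖ ≤ CQ → 0 < Cs →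
        ‖(μ0 + ∑ j, th j • μ j) - (μ0 + ∑ j, tt j • μ j)‖
            ≤ Cs * ‖Q (h1.toLp _) - Q (h3.toLp _)‖ →
        ‖Q (h2.toLp _) - Q (h3.toLp _)‖ ≤ ‖Q (h4.toLp _) - Q (h3.toLp _)‖ →
        Cs * CQ * ‖uh - uhh‖ ≤ 1 / 2 →
        Real.sqrt (∑ j, (th j - tt j) ^ 2)
          ≤ 2 * Cμ * Cs * CQ * ‖μ0 + ∑ j, tt j • μ j‖ * (‖ut - uth‖ + ‖uh - uhh‖) :=
  parameter_reconstruction_error_estimate_general m μ0 μ hind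
end
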